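/- arXiv:2205.08235 — 3 statements merged into one kernel-verified Lean document; each statement's English description precedes it below -/
import Mathlib

section
/- Let G be a connected graph with a bridge e = {v1, v2} whose removal yields components G1 (containing v1) and G2 (containing v2). If i and j are both vertices of G1, then the number of 2-tree spanning forests of G separating i and j equals τ_{G2} times the number of 2-tree spanning forests of G1 separating i and j. -/
open SimpleGraph Finset Matrix
open scoped Classical

noncomputable section

/-- Number of spanning trees of `G`. -/
noncomputable def tau {V : Type*} [Fintype V] (G : SimpleGraph V) : ℕ :=
  Set.ncard {H : SimpleGraph V | H ≤ G ∧ H.Connected ∧ H.IsAcyclic}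

/-- Number of 2-tree spanning forests of `G` separating `i` and `j`. -/
noncomputable def twoForest {V : Type*} [Fintype V] (G : SimpleGraph V) (i j : V) : ℕ :=
  Set.ncard {H : SimpleGraph V | H ≤ G ∧ H.IsAcyclic ∧ ¬ H.Reachable i j ∧
    ∀ v, H.Reachable i v ∨ H.Reachable j v}

/-- The four Penrose equations: `B` is the Moore–Penrose inverse of `A`. -/
def IsMoorePenroseInv {n : Type*} [Fintype n] (A B : Matrix n n ℝ) : Prop :=
  A * B * A = A ∧ B * A * B = B ∧ (A * B)ᵀ = A * B ∧ (B * A)ᵀ = B * A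

/-- Laplacian matrix of a graph. -/
noncomputable def lap {V : Type*} [Fintype V] [DecidableEq V] (G : SimpleGraph V) :
    Matrix V V ℝ :=
  fun i j => if i = j then (G.degree i : ℝ) else if G.Adj i j then -1 else 0

/-- Effective resistance computed from a (Moore–Penrose inverse) matrix `Ld`. -/
noncomputable def effRes {V : Type*} [Fintype V] [DecidableEq V] (Ld : Matrix V V ℝ)
    (i j : V) : ℝ :=
  (Pi.single i 1 - Pi.single j 1) ⬝ᵥ Ld.mulVec (Pi.single i 1 - Pi.single j 1)

/-- Transition matrix of the simple random walk on `G`. -/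
noncomputable def transP {V : Type*} [Fintype V] (G : SimpleGraph V) : Matrix V V ℝ :=
  fun i j => if G.Adj i j then (1 : ℝ) / (G.degree i) else 0

/-- Stationary distribution of the simple random walk. -/
noncomputable def statPi {V : Type*} [Fintype V] (G : SimpleGraph V) (i : V) : ℝ :=
  (G.degree i : ℝ) / (2 * G.edgeFinset.card)

/-- `M` is the matrix of mean first passage times of the random walk on `G`. -/
def IsMFPT {V : Type*} [Fintype V] (G : SimpleGraph V) (M : V → V → ℝ) : Prop :=
  (∀ j, M j j = 0) ∧ ∀ i j, i ≠ j → M i j = 1 + ∑ k, transP G i k * M k j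

/-- Kemeny's constant. -/
noncomputable def kemeny {V : Type*} [Fintype V] (G : SimpleGraph V) (M : V → V → ℝ) : ℝ :=
  ∑ i, ∑ j ∈ Finset.univ.filter (· ≠ i), statPi G i * M i j * statPi G j

/-- Accessibility index of vertex `v`. -/
noncomputable def acc {V : Type*} [Fintype V] (G : SimpleGraph V) (M : V → V → ℝ) (v : V) : ℝ :=
  ∑ i ∈ Finset.univ.filter (· ≠ v), statPi G i * M i v

/-- Joining `G1` and `G2` by the bridge `v1 ∼ v2`. -/
def chainTwo {V1 V2 : Type*} (G1 : SimpleGraph V1) (G2 : SimpleGraph V2)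
    (v1 : V1) (v2 : V2) : SimpleGraph (V1 ⊕ V2) where
  Adj p q :=
    match p, q with
    | Sum.inl a, Sum.inl b => G1.Adj a b
    | Sum.inr a, Sum.inr b => G2.Adj a b
    | Sum.inl a, Sum.inr b => a = v1 ∧ b = v2
    | Sum.inr a, Sum.inl b => b = v1 ∧ a = v2
  symm := ⟨by
    rintro (a | a) (b | b) h
    · exact h.symm
    · exact ⟨h.1, h.2⟩
    · exact ⟨h.1, h.2⟩
    · exact h.symm⟩
  loopless := ⟨by
    rintro (a | a) h
    · exact G1.irrefl h
    · exact G2.irrefl h⟩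

end

/-!
A 2-forest of the bridged graph separating two vertices of `G1` must contain the bridge, since the
tree through which `G2` is reached can only enter `G2` along it. Deleting the bridge therefore
splits the 2-forest into a 2-forest of `G1` separating the same vertices and a spanning tree of
`G2`; conversely, joining two acyclic graphs by a bridge keeps them acyclic. Reachability is
transported to either side along the retraction collapsing the other side onto its bridge end.
-/

namespace SimpleGraph

variable {V W : Type*} {G : SimpleGraph V} {H : SimpleGraph W}

theorem Reachable.lift {G' : SimpleGraph W} (f : V → W)
    (hf : ∀ ⦃u v⦄, G.Adj u v → G'.Reachable (f u) (f v)) {u v : V} (h : G.Reachable u v) :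
    G'.Reachable (f u) (f v) := by
  rw [reachable_iff_reflTransGen] at h ⊢
  exact Relation.ReflTransGen.lift' f
    (fun _ _ huv => (reachable_iff_reflTransGen _ _).mp (hf huv)) _ _ h

theorem Reachable.of_sum_inl {u v : V} (h : (G ⊕g H).Reachable (.inl u) (.inl v)) :
    G.Reachable u v := by
  refine h.lift (Sum.elim id fun _ => u) ?_
  rintro (a | a) (b | b) hab
  · exact (sum_adj_inl.mp hab).reachable
  · simp at hab
  · simp at hab
  · rfl

theorem Reachable.of_sum_inr {u v : W} (h : (G ⊕g H).Reachable (.inr u) (.inr v)) :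
    H.Reachable u v := by
  refine h.lift (Sum.elim (fun _ => u) id) ?_
  rintro (a | a) (b | b) hab
  · rfl
  · simp at hab
  · simp at hab
  · exact (sum_adj_inr.mp hab).reachable

theorem sum_deleteEdges_inl (u v : V) :
    (G ⊕g H).deleteEdges {s(.inl u, .inl v)} = G.deleteEdges {s(u, v)} ⊕g H := by
  ext (a | a) (b | b) <;> simp

theorem sum_deleteEdges_inr (u v : W) :
    (G ⊕g H).deleteEdges {s(.inr u, .inr v)} = G ⊕g H.deleteEdges {s(u, v)} := by
  ext (a | a) (b | b) <;> simp

theorem IsAcyclic.sum (hG : G.IsAcyclic) (hH : H.IsAcyclic) : (G ⊕g H).IsAcyclic := by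
  rw [isAcyclic_iff_forall_isBridge] at hG hH ⊢
  rintro ⟨a | a, b | b⟩ hab
  · rw [isBridge_iff, sum_deleteEdges_inl]
    exact fun h => isBridge_iff.mp (hG (e := s(a, b)) hab) h.of_sum_inl
  · simp at hab
  · simp at hab
  · rw [isBridge_iff, sum_deleteEdges_inr]
    exact fun h => isBridge_iff.mp (hH (e := s(a, b)) hab) h.of_sum_inr

end SimpleGraph

def spanningTreeSet {V : Type*} (G : SimpleGraph V) : Set (SimpleGraph V) :=
  {H | H ≤ G ∧ H.Connected ∧ H.IsAcyclic}

def twoForestSet {V : Type*} (G : SimpleGraph V) (i j : V) : Set (SimpleGraph V) :=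
  {H | H ≤ G ∧ H.IsAcyclic ∧ ¬ H.Reachable i j ∧
    ∀ v, H.Reachable i v ∨ H.Reachable j v}

section ChainTwo

variable {V1 V2 : Type*} {G1 F : SimpleGraph V1} {G2 T : SimpleGraph V2} {v1 : V1} {v2 : V2}
  {H : SimpleGraph (V1 ⊕ V2)}

theorem chainTwo_eq_sum_sup_edge :
    chainTwo G1 G2 v1 v2 = (G1 ⊕g G2) ⊔ edge (.inl v1) (.inr v2) := by
  ext (a | a) (b | b) <;> simp [chainTwo, edge_adj, and_comm]

theorem chainTwo_mono (hF : F ≤ G1) (hT : T ≤ G2) :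
    chainTwo F T v1 v2 ≤ chainTwo G1 G2 v1 v2 := by
  rintro (a | a) (b | b) h
  exacts [hF h, h, h, hT h]

theorem chainTwo_injective :
    Function.Injective (Function.uncurry (chainTwo · · v1 v2) :
      SimpleGraph V1 × SimpleGraph V2 → SimpleGraph (V1 ⊕ V2)) := by
  rintro ⟨F, T⟩ ⟨F', T'⟩ h
  exact Prod.ext (congrArg (·.comap Sum.inl) h) (congrArg (·.comap Sum.inr) h)

theorem chainTwo_comap_eq_of_le (hH : H ≤ chainTwo G1 G2 v1 v2)
    (hbridge : H.Adj (.inl v1) (.inr v2)) :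
    chainTwo (H.comap Sum.inl) (H.comap Sum.inr) v1 v2 = H := by
  ext (a | a) (b | b)
  · rfl
  · exact ⟨by rintro ⟨rfl, rfl⟩; exact hbridge, fun h => hH h⟩
  · exact ⟨by rintro ⟨rfl, rfl⟩; exact hbridge.symm, fun h => hH h⟩
  · rfl

theorem SimpleGraph.IsAcyclic.chainTwo (hF : F.IsAcyclic) (hT : T.IsAcyclic) :
    (chainTwo F T v1 v2).IsAcyclic := by
  rw [chainTwo_eq_sum_sup_edge]
  exact (hF.sum hT).sup_edge_of_not_reachable (not_reachable_sum_inl_inr _ _)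

theorem SimpleGraph.Reachable.comap_inl_of_le_chainTwo (hH : H ≤ chainTwo G1 G2 v1 v2)
    {a b : V1} (h : H.Reachable (.inl a) (.inl b)) : (H.comap Sum.inl).Reachable a b := by
  refine h.lift (Sum.elim id fun _ => v1) ?_
  rintro (a | a) (b | b) hab
  · exact Adj.reachable (G := H.comap Sum.inl) hab
  · obtain ⟨rfl, -⟩ := hH hab; rfl
  · obtain ⟨rfl, -⟩ := hH hab; rfl
  · rfl

theorem SimpleGraph.Reachable.comap_inr_of_le_chainTwo (hH : H ≤ chainTwo G1 G2 v1 v2)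
    {a : V1} {b : V2} (h : H.Reachable (.inl a) (.inr b)) : (H.comap Sum.inr).Reachable v2 b := by
  refine h.lift (Sum.elim (fun _ => v2) id) ?_
  rintro (a | a) (b | b) hab
  · rfl
  · obtain ⟨-, rfl⟩ := hH hab; rfl
  · obtain ⟨-, rfl⟩ := hH hab; rfl
  · exact Adj.reachable (G := H.comap Sum.inr) hab

theorem SimpleGraph.Reachable.adj_bridge_of_le_chainTwo (hH : H ≤ chainTwo G1 G2 v1 v2)
    {a : V1} {b : V2} (h : H.Reachable (.inl a) (.inr b)) : H.Adj (.inl v1) (.inr v2) := by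
  by_contra hbridge
  refine not_reachable_sum_inl_inr (G := G1) (H := G2) a b (h.mono ?_)
  rintro (a | a) (b | b) hab
  · exact hH hab
  · obtain ⟨rfl, rfl⟩ := hH hab; exact (hbridge hab).elim
  · obtain ⟨rfl, rfl⟩ := hH hab; exact (hbridge hab.symm).elim
  · exact hH hab

variable {i j : V1}

theorem chainTwo_mem_twoForestSet (hF : F ∈ twoForestSet G1 i j) (hT : T ∈ spanningTreeSet G2) :
    chainTwo F T v1 v2 ∈ twoForestSet (chainTwo G1 G2 v1 v2) (.inl i) (.inl j) := by
  obtain ⟨hFG, hFacyc, hFij, hFcover⟩ := hF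
  obtain ⟨hTG, hTconn, hTacyc⟩ := hT
  refine ⟨chainTwo_mono hFG hTG, hFacyc.chainTwo hTacyc, fun h => hFij ?_, ?_⟩
  · exact h.comap_inl_of_le_chainTwo le_rfl
  · rw [chainTwo_eq_sum_sup_edge]
    rintro (a | b)
    · exact (hFcover a).imp (fun h => (h.map Embedding.sumInl.toHom).mono le_sup_left)
        (fun h => (h.map Embedding.sumInl.toHom).mono le_sup_left)
    · exact (hFcover v1).imp (fun h => h.symm.sum_sup_edge (hTconn.preconnected v2 b))
        (fun h => h.symm.sum_sup_edge (hTconn.preconnected v2 b))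

theorem adj_bridge_of_mem_twoForestSet_chainTwo
    (hH : H ∈ twoForestSet (chainTwo G1 G2 v1 v2) (.inl i) (.inl j)) :
    H.Adj (.inl v1) (.inr v2) :=
  (hH.2.2.2 (.inr v2)).elim (·.adj_bridge_of_le_chainTwo hH.1) (·.adj_bridge_of_le_chainTwo hH.1)

theorem comap_inl_mem_twoForestSet
    (hH : H ∈ twoForestSet (chainTwo G1 G2 v1 v2) (.inl i) (.inl j)) :
    H.comap Sum.inl ∈ twoForestSet G1 i j := by
  obtain ⟨hHG, hHacyc, hHij, hHcover⟩ := hH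
  refine ⟨fun _ _ h => hHG h, hHacyc.comap (Hom.comap _ H) Sum.inl_injective,
    fun h => hHij (h.map (Hom.comap _ H)), fun v => ?_⟩
  exact (hHcover (.inl v)).imp (·.comap_inl_of_le_chainTwo hHG) (·.comap_inl_of_le_chainTwo hHG)

theorem comap_inr_mem_spanningTreeSet
    (hH : H ∈ twoForestSet (chainTwo G1 G2 v1 v2) (.inl i) (.inl j)) :
    H.comap Sum.inr ∈ spanningTreeSet G2 := by
  obtain ⟨hHG, hHacyc, -, hHcover⟩ := hH
  have hv2 (b : V2) : (H.comap Sum.inr).Reachable v2 b :=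
    (hHcover (.inr b)).elim (·.comap_inr_of_le_chainTwo hHG) (·.comap_inr_of_le_chainTwo hHG)
  refine ⟨fun _ _ h => hHG h, ?_, hHacyc.comap (Hom.comap _ H) Sum.inr_injective⟩
  exact (connected_iff_exists_forall_reachable _).mpr ⟨v2, hv2⟩

theorem twoForestSet_chainTwo_inl :
    twoForestSet (chainTwo G1 G2 v1 v2) (.inl i) (.inl j) =
      Function.uncurry (chainTwo · · v1 v2) '' (twoForestSet G1 i j ×ˢ spanningTreeSet G2) := by
  ext H
  constructor
  · intro hH
    exact ⟨(H.comap Sum.inl, H.comap Sum.inr),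
      ⟨comap_inl_mem_twoForestSet hH, comap_inr_mem_spanningTreeSet hH⟩,
      chainTwo_comap_eq_of_le hH.1 (adj_bridge_of_mem_twoForestSet_chainTwo hH)⟩
  · rintro ⟨⟨F, T⟩, ⟨hF, hT⟩, rfl⟩
    exact chainTwo_mem_twoForestSet hF hT

end ChainTwo

theorem twoForest_chainTwo_left_general {V1 V2 : Type*} [Fintype V1] [Fintype V2]
    (G1 : SimpleGraph V1) (G2 : SimpleGraph V2) (v1 : V1) (v2 : V2) (i j : V1) :
    twoForest (chainTwo G1 G2 v1 v2) (Sum.inl i) (Sum.inl j) =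
      tau G2 * twoForest G1 i j := by
  change (twoForestSet _ _ _).ncard = (spanningTreeSet G2).ncard * (twoForestSet G1 i j).ncard
  rw [twoForestSet_chainTwo_inl, Set.ncard_image_of_injective _ chainTwo_injective,
    Set.ncard_prod, mul_comm]

/-- if `i, j ∈ V(G1)`, the number of 2-tree spanning forests of `G`
separating `i` and `j` equals `τ_{G2} · f^{G1}_{i,j}`. -/
theorem twoForest_chainTwo_left {V1 V2 : Type*} [Fintype V1] [Fintype V2]
    (G1 : SimpleGraph V1) (G2 : SimpleGraph V2) (v1 : V1) (v2 : V2)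
    (h1 : G1.Connected) (h2 : G2.Connected) (i j : V1) :
    twoForest (chainTwo G1 G2 v1 v2) (Sum.inl i) (Sum.inl j) =
      tau G2 * twoForest G1 i j :=
  twoForest_chainTwo_left_general G1 G2 v1 v2 i j
end

section
/- For n ≥ 4, among all trees T on n vertices, the quantity C(T) := Σ_{edges {x,y} of T} |V(T_x)|·|V(T_y)| (where T_x, T_y are the components of T minus the edge {x,y} containing x and y respectively) is minimized exactly when T is a star K_{1,n−1}. -/
open SimpleGraph Finset
open scoped Classical

/-- Number of vertices of the component containing `x` after deleting the edge `{x,y}`. -/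
noncomputable def compSize {V : Type*} [Fintype V] (T : SimpleGraph V) (x y : V) : ℕ :=
  (((T.deleteEdges {s(x, y)}).connectedComponentMk x).supp).ncard

/-- `C(T) = ∑_{edges {x,y}} |V(T_x)|·|V(T_y)|` (each unordered edge counted once). -/
noncomputable def Cval {V : Type*} [Fintype V] (T : SimpleGraph V) : ℕ :=
  (∑ x, ∑ y, if T.Adj x y then compSize T x y * compSize T y x else 0) / 2

/-- `T` is a star with centre `c`. -/
def IsStarAt {V : Type*} (T : SimpleGraph V) (c : V) : Prop :=
  ∀ x y, T.Adj x y ↔ (x = c ∧ y ≠ c) ∨ (y = c ∧ x ≠ c)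

/-!
Deleting an edge `{x, y}` of a tree on `n` vertices leaves two components of sizes `a + b = n`
with `a, b ≥ 1`, so the edge contributes `a * b ≥ n - 1`, with equality iff `x` or `y` is a leaf.
Summing over the `n - 1` edges gives `C(T) ≥ (n - 1)²`, with equality iff every edge has a leaf
end. For `n ≥ 3` such a tree is a star: some vertex `c` has two neighbours, so `c` is not a leaf,
all neighbours of `c` are leaves, and by connectedness they are all the other vertices.
-/

theorem Nat.mul_eq_add_sub_one_iff {a b : ℕ} (ha : a ≠ 0) (hb : b ≠ 0) :
    a * b = a + b - 1 ↔ a = 1 ∨ b = 1 := by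
  refine ⟨fun h ↦ ?_, by rintro (rfl | rfl) <;> simp⟩
  by_contra! hab
  have := add_le_mul (a := a) (b := b) (by omega) (by omega)
  omega

namespace SimpleGraph

variable {V : Type*}

theorem sum_sum_ite_adj_eq_two_nsmul_sum_edgeFinset {M : Type*} [Fintype V] [DecidableEq V]
    [AddCommMonoid M] (G : SimpleGraph V) [DecidableRel G.Adj] (f : Sym2 V → M) :
    ∑ x, ∑ y, (if G.Adj x y then f s(x, y) else 0) = 2 • ∑ e ∈ G.edgeFinset, f e := by
  have hdarts : ∑ x, ∑ y, (if G.Adj x y then f s(x, y) else 0) = ∑ d : G.Dart, f d.edge := by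
    rw [← Fintype.sum_prod_type' (fun x y ↦ if G.Adj x y then f s(x, y) else 0), ← sum_filter]
    exact sum_bij' (fun p hp ↦ ⟨p, (mem_filter.1 hp).2⟩) (fun d _ ↦ d.toProd) (by simp)
      (by simp) (by simp) (by simp) (by simp)
  rw [hdarts, ← sum_fiberwise_of_maps_to (t := G.edgeFinset) (g := Dart.edge) (by simp),
    smul_sum]
  refine sum_congr rfl fun e he ↦ ?_
  rw [sum_congr rfl fun d hd ↦ congrArg f (mem_filter.1 hd).2, sum_const,
    dart_edge_fiber_card G e (mem_edgeFinset.1 he)]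

theorem Reachable.mem_of_forall_adj_mem {G : SimpleGraph V} {s : Set V}
    (hs : ∀ a b, G.Adj a b → a ∈ s → b ∈ s) {u v : V} (h : G.Reachable u v) (hu : u ∈ s) :
    v ∈ s := by
  obtain ⟨p⟩ := h
  induction p with
  | nil => exact hu
  | cons hadj _ ih => exact ih (hs _ _ hadj hu)

theorem ncard_supp_connectedComponentMk_eq_one_iff [Finite V] (G : SimpleGraph V) (x : V) :
    (G.connectedComponentMk x).supp.ncard = 1 ↔ G.IsIsolated x := by
  rw [Set.ncard_eq_one]
  constructor
  · rintro ⟨a, ha⟩ z hz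
    have hx : x ∈ (G.connectedComponentMk x).supp := rfl
    have hz' : z ∈ (G.connectedComponentMk x).supp :=
      (ConnectedComponent.connectedComponentMk_eq_of_adj hz).symm
    rw [ha] at hx hz'
    exact hz.ne (hx.trans hz'.symm)
  · refine fun hx ↦ ⟨x, Set.eq_singleton_iff_unique_mem.2 ⟨rfl, fun v hv ↦ ?_⟩⟩
    by_contra hvx
    exact not_reachable_of_neighborSet_left_eq_empty (Ne.symm hvx)
      ((neighborSet_eq_empty G).2 hx) (ConnectedComponent.eq.1 hv).symm

theorem isIsolated_deleteEdges_iff {G : SimpleGraph V} {x y : V} :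
    (G.deleteEdges {s(x, y)}).IsIsolated x ↔ ∀ z, G.Adj x z → z = y := by
  simp only [IsIsolated, deleteEdges_adj, Set.mem_singleton_iff, Sym2.congr_right, not_and,
    not_not]

theorem IsTree.reachable_deleteEdges_or {T : SimpleGraph V} (hT : T.IsTree) (x y v : V) :
    (T.deleteEdges {s(x, y)}).Reachable x v ∨ (T.deleteEdges {s(x, y)}).Reachable y v := by
  refine (hT.connected.preconnected x v).mem_of_forall_adj_mem
    (s := {w | _ ∨ _}) (fun a b hab ha ↦ ?_) (Or.inl .rfl)
  by_cases he : s(a, b) = s(x, y)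
  · rcases Sym2.eq_iff.1 he with ⟨-, rfl⟩ | ⟨-, rfl⟩
    exacts [Or.inr .rfl, Or.inl .rfl]
  · have : (T.deleteEdges {s(x, y)}).Adj a b := deleteEdges_adj.2 ⟨hab, he⟩
    exact ha.imp (·.trans this.reachable) (·.trans this.reachable)

theorem IsTree.exists_adj_adj_ne [Fintype V] {T : SimpleGraph V} (hT : T.IsTree)
    (hV : 3 ≤ Fintype.card V) : ∃ c z₁ z₂, T.Adj c z₁ ∧ T.Adj c z₂ ∧ z₁ ≠ z₂ := by
  have hsum : ∑ _v : V, 1 < ∑ v, T.degree v := by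
    rw [sum_degrees_eq_twice_card_edges, sum_const, card_univ, smul_eq_mul, mul_one]
    have := hT.card_edgeFinset
    omega
  obtain ⟨c, -, hc⟩ := exists_lt_of_sum_lt hsum
  obtain ⟨z₁, hz₁, z₂, hz₂, hne⟩ := one_lt_card.1 hc
  exact ⟨c, z₁, z₂, (mem_neighborFinset _ _ _).1 hz₁, (mem_neighborFinset _ _ _).1 hz₂, hne⟩

theorem starGraph_adj_pendant {c x y : V} (h : (starGraph c).Adj x y) :
    (∀ z, (starGraph c).Adj x z → z = y) ∨ (∀ z, (starGraph c).Adj y z → z = x) := by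
  simp only [starGraph_adj] at *
  grind

end SimpleGraph

theorem isStarAt_iff_eq_starGraph {V : Type*} {T : SimpleGraph V} {c : V} :
    IsStarAt T c ↔ T = starGraph c := by
  rw [IsStarAt, SimpleGraph.ext_iff, funext_iff]
  simp only [funext_iff, eq_iff_iff, starGraph_adj]
  grind

theorem SimpleGraph.IsTree.exists_isStarAt {V : Type*} [Fintype V] {T : SimpleGraph V}
    (hT : T.IsTree) (hV : 3 ≤ Fintype.card V)
    (h : ∀ x y, T.Adj x y → (∀ z, T.Adj x z → z = y) ∨ (∀ z, T.Adj y z → z = x)) :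
    ∃ c, IsStarAt T c := by
  obtain ⟨c, z₁, z₂, h₁, h₂, hne⟩ := hT.exists_adj_adj_ne hV
  have hleaf : ∀ w, T.Adj c w → ∀ z, T.Adj w z → z = c := fun w hw ↦
    (h c w hw).resolve_left fun hc ↦ hne ((hc z₁ h₁).trans (hc z₂ h₂).symm)
  have hcover : ∀ v, v = c ∨ T.Adj c v := fun v ↦
    (hT.connected.preconnected c v).mem_of_forall_adj_mem (s := {v | v = c ∨ T.Adj c v})
      (by rintro a b hab (rfl | hca); exacts [Or.inr hab, Or.inl (hleaf a hca b hab)])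
      (Or.inl rfl)
  refine ⟨c, fun x y ↦ ⟨fun hxy ↦ ?_, ?_⟩⟩
  · rcases hcover x with rfl | hcx
    · exact Or.inl ⟨rfl, hxy.ne.symm⟩
    · exact Or.inr ⟨hleaf x hcx y hxy, hcx.ne.symm⟩
  · rintro (⟨rfl, hy⟩ | ⟨rfl, hx⟩)
    · exact (hcover y).resolve_left hy
    · exact ((hcover x).resolve_left hx).symm

variable {V : Type*} [Fintype V]

theorem compSize_pos (T : SimpleGraph V) (x y : V) : 0 < compSize T x y :=
  (Set.ncard_pos).2 ⟨x, rfl⟩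

theorem compSize_eq_one_iff {T : SimpleGraph V} {x y : V} :
    compSize T x y = 1 ↔ ∀ z, T.Adj x z → z = y := by
  rw [compSize, ncard_supp_connectedComponentMk_eq_one_iff, isIsolated_deleteEdges_iff]

theorem compSize_add_compSize {T : SimpleGraph V} (hT : T.IsTree) {x y : V} (hxy : T.Adj x y) :
    compSize T x y + compSize T y x = Fintype.card V := by
  set G := T.deleteEdges {s(x, y)}
  have hG : T.deleteEdges {s(y, x)} = G := by rw [Sym2.eq_swap]
  have hbridge : ¬ G.Reachable x y := isAcyclic_iff_forall_adj_isBridge.1 hT.isAcyclic hxy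
  have hdisj : Disjoint (G.connectedComponentMk x).supp (G.connectedComponentMk y).supp :=
    pairwise_disjoint_supp_connectedComponent _ (mt ConnectedComponent.eq.1 hbridge)
  have hunion : (G.connectedComponentMk x).supp ∪ (G.connectedComponentMk y).supp = .univ :=
    Set.eq_univ_of_forall fun v ↦ (hT.reachable_deleteEdges_or x y v).imp
      (fun h ↦ ConnectedComponent.eq.2 h.symm) (fun h ↦ ConnectedComponent.eq.2 h.symm)
  rw [compSize, compSize, hG, ← Set.ncard_union_eq hdisj, hunion, Set.ncard_univ,
    Nat.card_eq_fintype_card]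

noncomputable def edgeWeight (T : SimpleGraph V) : Sym2 V → ℕ :=
  Sym2.lift ⟨fun x y ↦ compSize T x y * compSize T y x, fun _ _ ↦ mul_comm _ _⟩

@[simp]
theorem edgeWeight_mk (T : SimpleGraph V) (x y : V) :
    edgeWeight T s(x, y) = compSize T x y * compSize T y x :=
  rfl

theorem Cval_eq_sum_edgeWeight (T : SimpleGraph V) :
    Cval T = ∑ e ∈ T.edgeFinset, edgeWeight T e := by
  have h := T.sum_sum_ite_adj_eq_two_nsmul_sum_edgeFinset (edgeWeight T)
  simp only [edgeWeight_mk] at h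
  rw [Cval, h, smul_eq_mul, Nat.mul_div_cancel_left _ two_pos]

section Tree

variable {T : SimpleGraph V} (hT : T.IsTree)
include hT

theorem card_sub_one_le_edgeWeight {e : Sym2 V} (he : e ∈ T.edgeSet) :
    Fintype.card V - 1 ≤ edgeWeight T e := by
  obtain ⟨x, y⟩ := e
  rw [edgeWeight_mk, ← compSize_add_compSize hT he]
  exact Nat.add_sub_one_le_mul (compSize_pos T x y).ne' (compSize_pos T y x).ne'

theorem edgeWeight_eq_card_sub_one_iff {x y : V} (hxy : T.Adj x y) :
    edgeWeight T s(x, y) = Fintype.card V - 1 ↔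
      (∀ z, T.Adj x z → z = y) ∨ (∀ z, T.Adj y z → z = x) := by
  rw [edgeWeight_mk, ← compSize_add_compSize hT hxy,
    Nat.mul_eq_add_sub_one_iff (compSize_pos T x y).ne' (compSize_pos T y x).ne',
    compSize_eq_one_iff, compSize_eq_one_iff]

theorem sq_card_sub_one_eq_sum_edgeFinset :
    (Fintype.card V - 1) ^ 2 = ∑ _e ∈ T.edgeFinset, (Fintype.card V - 1) := by
  have := hT.card_edgeFinset
  rw [sum_const, smul_eq_mul, sq]
  congr 1
  omega

theorem sq_card_sub_one_le_Cval : (Fintype.card V - 1) ^ 2 ≤ Cval T := by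
  rw [Cval_eq_sum_edgeWeight, sq_card_sub_one_eq_sum_edgeFinset hT]
  exact sum_le_sum fun e he ↦ card_sub_one_le_edgeWeight hT (mem_edgeFinset.1 he)

theorem Cval_eq_sq_card_sub_one_iff :
    Cval T = (Fintype.card V - 1) ^ 2 ↔
      ∀ x y, T.Adj x y → (∀ z, T.Adj x z → z = y) ∨ (∀ z, T.Adj y z → z = x) := by
  rw [Cval_eq_sum_edgeWeight, sq_card_sub_one_eq_sum_edgeFinset hT, eq_comm,
    sum_eq_sum_iff_of_le fun e he ↦ card_sub_one_le_edgeWeight hT (mem_edgeFinset.1 he)]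
  refine ⟨fun h x y hxy ↦ ?_, ?_⟩
  · exact (edgeWeight_eq_card_sub_one_iff hT hxy).1 (h _ (mem_edgeFinset.2 hxy)).symm
  · rintro h ⟨x, y⟩ he
    rw [mem_edgeFinset, mem_edgeSet] at he
    exact ((edgeWeight_eq_card_sub_one_iff hT he).2 (h x y he)).symm

end Tree

theorem Cval_starGraph (c : V) : Cval (starGraph c) = (Fintype.card V - 1) ^ 2 :=
  (Cval_eq_sq_card_sub_one_iff (isTree_starGraph c)).2 fun _ _ ↦ starGraph_adj_pendant

/-- for `n ≥ 4`, among trees on `n` vertices, `C(T)` is minimized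
exactly when `T` is a star. -/
theorem Cval_min_iff_star {n : ℕ} (hn : 4 ≤ n) (T : SimpleGraph (Fin n))
    (hT : T.IsTree) :
    (∀ S : SimpleGraph (Fin n), S.IsTree → Cval T ≤ Cval S) ↔ ∃ c, IsStarAt T c := by
  constructor
  · intro hmin
    have hle := hmin _ (isTree_starGraph (⟨0, by omega⟩ : Fin n))
    rw [Cval_starGraph] at hle
    refine hT.exists_isStarAt (by rw [Fintype.card_fin]; omega)
      ((Cval_eq_sq_card_sub_one_iff hT).1 ?_)
    exact hle.antisymm (sq_card_sub_one_le_Cval hT)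
  · rintro ⟨c, hc⟩ S hS
    rw [isStarAt_iff_eq_starGraph.1 hc, Cval_starGraph]
    exact sq_card_sub_one_le_Cval hS
end

section
/- Let T be a tree on n vertices and v a pendent (degree-one) vertex of T. For each vertex w ≠ v, let c_v(w) be the number of vertices of the subtree obtained from T by removing the branch of T at w containing v. Then Σ_{w ≠ v} c_v(w) is minimized over all trees T on n vertices with pendent vertex v exactly when T is a star centred at the neighbour of v. -/
open SimpleGraph Finset
open scoped Classical

/-- Number of vertices of the branch of `T` at `w` containing `v`, i.e. the set of
vertices joined to `v` by a walk avoiding `w`. -/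
noncomputable def branchCard {V : Type*} [Fintype V] (T : SimpleGraph V) (v w : V) : ℕ :=
  Set.ncard {u : V | ∃ p : T.Walk u v, w ∉ p.support}

/-- `c_v(w)`: number of vertices of the subtree obtained from `T` by removing the
branch of `T` at `w` containing `v`. -/
noncomputable def cvw {V : Type*} [Fintype V] (T : SimpleGraph V) (v w : V) : ℕ :=
  Fintype.card V - branchCard T v w

/-!
For `w ≠ v`, `c_v(w)` counts the vertices `u` whose path to `v` passes through `w`, so counting
the pairs `(u, w)` the other way round gives `∑_{w ≠ v} c_v(w) = ∑_u d(u, v)`. If `c` is the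
neighbour of the pendent vertex `v`, then `d(c, v) = 1` and `d(u, v) ≥ 2` for the `n - 2` other
vertices `u ≠ v`, with equality throughout exactly when every such `u` is adjacent to `c`, that is,
when `T` is the star centred at `c`.
-/

namespace SimpleGraph

variable {V : Type*} {G : SimpleGraph V} {u v w c : V}

lemma eq_of_adj_of_degree_eq_one [Fintype (G.neighborSet v)] (hv : G.degree v = 1)
    (hc : G.Adj v c) (hu : G.Adj v u) : u = c :=
  (degree_eq_one_iff_existsUnique_adj.mp hv).unique hu hc

lemma two_le_dist_of_degree_eq_one [Fintype (G.neighborSet v)] (hv : G.degree v = 1)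
    (hc : G.Adj v c) (hr : G.Reachable u v) (huv : u ≠ v) (huc : u ≠ c) : 2 ≤ G.dist u v := by
  have h0 : G.dist u v ≠ 0 := hr.dist_eq_zero_iff.not.mpr huv
  have h1 : G.dist u v ≠ 1 := fun h =>
    huc (eq_of_adj_of_degree_eq_one hv hc (dist_eq_one_iff_adj.mp h).symm)
  omega

lemma dist_eq_two_iff_adj_of_degree_eq_one [Fintype (G.neighborSet v)] (hv : G.degree v = 1)
    (hc : G.Adj v c) (huv : u ≠ v) : G.dist u v = 2 ↔ G.Adj u c := by
  refine ⟨fun h => ?_, fun huc => ?_⟩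
  · obtain ⟨p, hp⟩ := exists_walk_of_dist_ne_zero (h ▸ two_ne_zero : G.dist u v ≠ 0)
    have h1 := p.adj_getVert_succ (i := 0) (by omega)
    have h2 := p.adj_getVert_succ (i := 1) (by omega)
    rw [p.getVert_zero] at h1
    rw [show 1 + 1 = p.length by omega, p.getVert_length] at h2
    rwa [eq_of_adj_of_degree_eq_one hv hc h2.symm] at h1
  · let p : G.Walk u v := .cons huc (.cons hc.symm .nil)
    have hle : G.dist u v ≤ 2 := dist_le p
    have hge := two_le_dist_of_degree_eq_one hv hc p.reachable huv huc.ne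
    omega

lemma Walk.IsPath.card_support_toFinset_erase_end [DecidableEq V] {p : G.Walk u v}
    (hp : p.IsPath) : #(p.support.toFinset.erase v) = p.length := by
  rw [card_erase_of_mem (by simp), List.toFinset_card_of_nodup hp.support_nodup,
    Walk.length_support, Nat.add_sub_cancel]

lemma IsAcyclic.forall_walk_mem_support_iff (hG : G.IsAcyclic) {p : G.Walk u v}
    (hp : p.IsPath) : (∀ q : G.Walk u v, w ∈ q.support) ↔ w ∈ p.support := by
  refine ⟨fun h => h p, fun h q => q.support_bypass_subset_support ?_⟩
  have hq : q.bypass = p :=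
    congrArg Subtype.val <| (hG.subsingleton_path u v).elim ⟨_, q.bypass_isPath⟩ ⟨p, hp⟩
  rwa [hq]

lemma IsAcyclic.isStarAt_iff (hG : G.IsAcyclic) : IsStarAt G c ↔ ∀ u ≠ c, G.Adj u c := by
  refine ⟨fun h u hu => (h u c).mpr (Or.inr ⟨rfl, hu⟩), fun h x y => ⟨fun hxy => ?_, ?_⟩⟩
  · by_contra! hne
    have hx : x ≠ c := fun hx => hxy.ne (hx.trans (hne.1 hx).symm)
    have hy : y ≠ c := fun hy => hxy.ne ((hne.2 hy).trans hy.symm)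
    exact hG.cliqueFree le_rfl {x, y, c} (is3Clique_triple_iff.mpr ⟨hxy, h x hx, h y hy⟩)
  · rintro (⟨rfl, hy⟩ | ⟨rfl, hx⟩)
    exacts [(h y hy).symm, h x hx]

end SimpleGraph

open SimpleGraph

section

variable {V : Type*} [Fintype V] {T : SimpleGraph V} {v c : V}

lemma cvw_eq_card_filter_forall_mem_support (T : SimpleGraph V) (v w : V) :
    cvw T v w = #{u | ∀ p : T.Walk u v, w ∈ p.support} := by
  have h := card_filter_add_card_filter_not (s := univ)
    fun u => ∃ p : T.Walk u v, w ∉ p.support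
  simp only [not_exists, not_not, card_univ] at h
  rw [cvw, branchCard, Set.ncard_eq_toFinset_card', Set.toFinset_ofPred]
  omega

theorem sum_cvw_eq_sum_dist (hT : T.IsTree) (v : V) :
    ∑ w ∈ univ.filter (· ≠ v), cvw T v w = ∑ u, T.dist u v := by
  choose P hP hlen using fun u => hT.connected.exists_path_of_dist u v
  calc ∑ w ∈ univ.filter (· ≠ v), cvw T v w
      = ∑ w ∈ univ.filter (· ≠ v), #{u | w ∈ (P u).support} := by
        refine sum_congr rfl fun w _ => ?_
        simp only [cvw_eq_card_filter_forall_mem_support,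
          hT.isAcyclic.forall_walk_mem_support_iff (hP _)]
    _ = ∑ u, #{w ∈ univ.filter (· ≠ v) | w ∈ (P u).support} :=
        sum_card_bipartiteAbove_eq_sum_card_bipartiteBelow _
    _ = ∑ u, T.dist u v := by
        refine sum_congr rfl fun u _ => ?_
        rw [← hlen, ← (hP u).card_support_toFinset_erase_end]
        congr 1
        ext w
        simp

lemma sum_dist_eq_one_add_sum_erase_erase (hc : T.Adj v c) :
    ∑ u, T.dist u v = 1 + ∑ u ∈ (univ.erase v).erase c, T.dist u v := by
  rw [← add_sum_erase _ _ (mem_univ v), ← add_sum_erase _ _ (mem_erase.mpr ⟨hc.ne', mem_univ c⟩),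
    dist_self, dist_eq_one_iff_adj.mpr hc.symm, zero_add]

lemma card_erase_erase_univ (hvc : v ≠ c) :
    #((univ.erase v).erase c) = Fintype.card V - 2 := by
  rw [card_erase_of_mem (mem_erase.mpr ⟨hvc.symm, mem_univ c⟩), card_erase_of_mem (mem_univ v),
    card_univ, Nat.sub_sub]

section Pendent

variable [Fintype (T.neighborSet v)]

lemma two_le_dist_of_mem_erase_erase (hT : T.Connected) (hv : T.degree v = 1) (hc : T.Adj v c) :
    ∀ u ∈ (univ.erase v).erase c, 2 ≤ T.dist u v := fun u hu => by
  simp only [mem_erase, mem_univ, and_true] at hu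
  exact two_le_dist_of_degree_eq_one hv hc (hT u v) hu.2 hu.1

lemma le_sum_dist_of_degree_eq_one (hT : T.Connected) (hv : T.degree v = 1) (hc : T.Adj v c) :
    1 + 2 * (Fintype.card V - 2) ≤ ∑ u, T.dist u v := by
  rw [sum_dist_eq_one_add_sum_erase_erase hc, ← card_erase_erase_univ hc.ne, mul_comm,
    ← smul_eq_mul]
  exact Nat.add_le_add_left (card_nsmul_le_sum _ _ _ (two_le_dist_of_mem_erase_erase hT hv hc)) 1

lemma sum_dist_eq_iff_isStarAt (hT : T.IsTree) (hv : T.degree v = 1) (hc : T.Adj v c) :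
    ∑ u, T.dist u v = 1 + 2 * (Fintype.card V - 2) ↔ IsStarAt T c := by
  rw [sum_dist_eq_one_add_sum_erase_erase hc, ← card_erase_erase_univ hc.ne, mul_comm,
    ← smul_eq_mul, ← sum_const, add_right_inj, eq_comm,
    sum_eq_sum_iff_of_le (two_le_dist_of_mem_erase_erase hT.connected hv hc),
    hT.isAcyclic.isStarAt_iff]
  refine ⟨fun h u huc => ?_, fun h u hu => ?_⟩
  · by_cases huv : u = v
    · exact huv ▸ hc
    · exact (dist_eq_two_iff_adj_of_degree_eq_one hv hc huv).mp (h u (by simp [huv, huc])).symm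
  · simp only [mem_erase, mem_univ, and_true] at hu
    exact ((dist_eq_two_iff_adj_of_degree_eq_one hv hc hu.2).mpr (h u hu.1)).symm

end Pendent

end

/-- for trees `T` with pendent vertex `v`, the quantity
`∑_{w ≠ v} c_v(w)` is minimized exactly when `T` is a star centred at the
neighbour of `v`. -/
theorem sum_cvw_min_iff_star {V : Type*} [Fintype V] (v : V) (T : SimpleGraph V)
    (hT : T.IsTree) (hv : T.degree v = 1) :
    (∀ T' : SimpleGraph V, T'.IsTree → T'.degree v = 1 →
        (∑ w ∈ Finset.univ.filter (· ≠ v), cvw T v w) ≤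
          ∑ w ∈ Finset.univ.filter (· ≠ v), cvw T' v w) ↔
      ∃ c, T.Adj v c ∧ IsStarAt T c := by
  constructor
  · intro hmin
    obtain ⟨c, hc, -⟩ := degree_eq_one_iff_existsUnique_adj.mp hv
    have hstar : IsStarAt (starGraph c) c := fun x y => by grind [starGraph_adj]
    have hdeg := degree_starGraph_of_ne_center hc.ne
    have hle := hmin (starGraph c) (isTree_starGraph c) (by convert hdeg)
    rw [sum_cvw_eq_sum_dist hT, sum_cvw_eq_sum_dist (isTree_starGraph c),
      (sum_dist_eq_iff_isStarAt (isTree_starGraph c) hdeg (starGraph_center_adj' hc.ne')).mpr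
        hstar] at hle
    exact ⟨c, hc, (sum_dist_eq_iff_isStarAt hT hv hc).mp
      (hle.antisymm (le_sum_dist_of_degree_eq_one hT.connected hv hc))⟩
  · rintro ⟨c, hc, hstar⟩ T' hT' hv'
    obtain ⟨c', hc', -⟩ := degree_eq_one_iff_existsUnique_adj.mp hv'
    rw [sum_cvw_eq_sum_dist hT, sum_cvw_eq_sum_dist hT',
      (sum_dist_eq_iff_isStarAt hT hv hc).mpr hstar]
    exact le_sum_dist_of_degree_eq_one hT'.connected hv' hc'
end
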